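/- arXiv:1105.1629 — 7 statements merged into one kernel-verified Lean document; each statement's English description precedes it below -/
import Mathlib

section
/- Let n be a positive integer with 2 ≤ ω(n) ≤ 12. Then for every integer x, among the ω(n)² consecutive integers x + 1, x + 2, …, x + ω(n)² there is at least one integer coprime to n. (Equivalently, the Jacobsthal function satisfies g(n) ≤ ω(n)² whenever 2 ≤ ω(n) ≤ 12.) -/
/-!
Suppose every integer of a window of length `L = ω(n)²` shares a prime factor with `n`. Split the
prime factors of `n` into the small ones `Q` (those below `c`, with `c = 3` if `ω(n) ≤ 4` and
`c = 5` otherwise), with product `d`, and the large ones. By periodicity the window contains at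
least `φ(d) ⌊L / d⌋` integers coprime to `d`, each of them divisible by a large prime `p`, and for
each `p` at most `φ(d) ⌈L / (d p)⌉` of them are. Hence `⌊L / d⌋ ≤ ∑ₚ ⌈L / (d p)⌉`; the right-hand
side only grows when the large primes are replaced by the smallest primes `≥ c`, and a finite
computation shows that the inequality then fails for every `2 ≤ ω(n) ≤ 12`.
-/

open Finset Function

namespace Nat

section

variable {p : ℕ → Prop} [DecidablePred p] {r : ℕ}

theorem card_filter_Ico_mul_eq_of_periodic (hp : Periodic p r) (a q : ℕ) :
    #{x ∈ Ico a (a + r * q) | p x} = q * count p r := by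
  induction q with
  | zero => simp
  | succ q ih =>
    rw [mul_add_one, ← add_assoc,
      ← Ico_union_Ico_eq_Ico (Nat.le_add_right _ _) (Nat.le_add_right _ _), filter_union,
      card_union_of_disjoint (disjoint_filter_filter (Ico_disjoint_Ico_consecutive ..)), ih,
      filter_Ico_card_eq_of_periodic _ _ _ hp, add_one_mul]

theorem div_mul_count_le_card_filter_Ico (hp : Periodic p r) (a L : ℕ) :
    L / r * count p r ≤ #{x ∈ Ico a (a + L) | p x} := by
  rw [← card_filter_Ico_mul_eq_of_periodic hp]
  exact card_le_card <| filter_subset_filter _ <|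
    Ico_subset_Ico_right (by simpa using Nat.mul_div_le L r)

theorem card_filter_Ico_le_ceilDiv_mul_count (hp : Periodic p r) (hr : 0 < r) (a L : ℕ) :
    #{x ∈ Ico a (a + L) | p x} ≤ L ⌈/⌉ r * count p r := by
  rw [← card_filter_Ico_mul_eq_of_periodic hp]
  exact card_le_card <| filter_subset_filter _ <|
    Ico_subset_Ico_right (by simpa using (ceilDiv_le_iff_le_mul hr).1 le_rfl)

theorem nth_eq_of_count_eq {v i : ℕ} (hv : p v) (h : count p v = i) : nth p i = v :=
  h ▸ nth_count hv

theorem sum_le_sum_range_nth {M : Type*} [AddCommMonoid M] [PartialOrder M]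
    [IsOrderedAddMonoid M] (hp : {x | p x}.Infinite) {f : ℕ → M} (hf : AntitoneOn f {x | p x})
    {S : Finset ℕ} (hS : ∀ x ∈ S, p x) :
    ∑ x ∈ S, f x ≤ ∑ i ∈ range #S, f (nth p i) := by
  induction S using Finset.induction_on_max with
  | empty => simp
  | insert a S hlt ih =>
    have haS : a ∉ S := fun h => (hlt a h).false
    have hpa : p a := hS a (mem_insert_self a S)
    have hcard : #S ≤ count p a := by
      rw [count_eq_card_filter_range]
      exact card_le_card fun x hx =>
        mem_filter.2 ⟨mem_range.2 (hlt x hx), hS x (mem_insert_of_mem hx)⟩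
    have hnth : nth p #S ≤ a := by
      rw [← Nat.lt_succ_iff, ← lt_nth_iff_count_lt (p := p) hp, count_succ, if_pos hpa]
      omega
    rw [sum_insert haS, card_insert_of_notMem haS, sum_range_succ, add_comm]
    exact _root_.add_le_add (ih fun x hx => hS x (mem_insert_of_mem hx))
      (hf (nth_mem_of_infinite (p := p) hp _) hpa hnth)

end

theorem periodic_coprime_and_dvd (d p : ℕ) :
    Periodic (fun x => d.Coprime x ∧ p ∣ x) (d * p) := by
  intro x
  simp only [mul_comm d p, coprime_add_mul_right_right, Nat.dvd_add_left (dvd_mul_right p d)]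

theorem count_coprime_and_dvd {d p : ℕ} (hp : 0 < p) (hdp : d.Coprime p) :
    count (fun x => d.Coprime x ∧ p ∣ x) (d * p) = φ d := by
  rw [count_eq_card_filter_range, totient,
    ← Finset.card_image_of_injective {y ∈ range d | d.Coprime y} (mul_right_injective₀ hp.ne')]
  congr 1
  ext x
  simp only [mem_filter, mem_range, mem_image]
  constructor
  · rintro ⟨hx, hcop, y, rfl⟩
    exact ⟨y, ⟨Nat.lt_of_mul_lt_mul_left (mul_comm d p ▸ hx), (coprime_mul_iff_right.1 hcop).2⟩,
      rfl⟩
  · rintro ⟨y, ⟨hy, hcop⟩, rfl⟩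
    exact ⟨mul_comm d p ▸ Nat.mul_lt_mul_of_pos_left hy hp, hdp.mul_right hcop, dvd_mul_right p y⟩

theorem antitoneOn_ceilDiv_mul (L : ℕ) {d : ℕ} (hd : 0 < d) :
    AntitoneOn (fun p => L ⌈/⌉ (d * p)) (Set.Ioi 0) := by
  intro p hp q hq hpq
  rw [ceilDiv_le_iff_le_mul (mul_pos hd hq)]
  exact ((ceilDiv_le_iff_le_mul (mul_pos hd hp)).1 le_rfl).trans
    (Nat.mul_le_mul_right _ (Nat.mul_le_mul_left d hpq))

theorem div_le_sum_ceilDiv_of_forall_not_coprime {n a L : ℕ} (hn : n ≠ 0) {Q : Finset ℕ}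
    (hQ : Q ⊆ n.primeFactors) (h : ∀ x ∈ Ico a (a + L), ¬ n.Coprime x) :
    L / ∏ q ∈ Q, q ≤ ∑ p ∈ n.primeFactors \ Q, L ⌈/⌉ ((∏ q ∈ Q, q) * p) := by
  set d := ∏ q ∈ Q, q
  have hd : 0 < d := prod_pos fun q hq => (prime_of_mem_primeFactors (hQ hq)).pos
  have hcop : ∀ p ∈ n.primeFactors \ Q, d.Coprime p := fun p hp =>
    Coprime.prod_left fun q hq => (coprime_primes (prime_of_mem_primeFactors (hQ hq))
      (prime_of_mem_primeFactors (mem_sdiff.1 hp).1)).2 fun h => (mem_sdiff.1 hp).2 (h ▸ hq)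
  have cover : {x ∈ Ico a (a + L) | d.Coprime x} ⊆
      (n.primeFactors \ Q).biUnion fun p => {x ∈ Ico a (a + L) | d.Coprime x ∧ p ∣ x} := by
    intro x hx
    obtain ⟨hx, hdx⟩ := mem_filter.1 hx
    obtain ⟨p, hp, hpn, hpx⟩ := Prime.not_coprime_iff_dvd.1 (h x hx)
    have hpQ : p ∉ Q := fun hpQ =>
      hp.one_lt.ne' (eq_one_of_dvd_coprimes hdx (dvd_prod_of_mem _ hpQ) hpx)
    exact mem_biUnion.2
      ⟨p, mem_sdiff.2 ⟨mem_primeFactors.2 ⟨hp, hpn, hn⟩, hpQ⟩, mem_filter.2 ⟨hx, hdx, hpx⟩⟩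
  have key : φ d * (L / d) ≤ φ d * ∑ p ∈ n.primeFactors \ Q, L ⌈/⌉ (d * p) := calc
    φ d * (L / d) = L / d * count d.Coprime d := by
      rw [count_eq_card_filter_range, totient, mul_comm]
    _ ≤ #{x ∈ Ico a (a + L) | d.Coprime x} :=
      div_mul_count_le_card_filter_Ico (periodic_coprime d) a L
    _ ≤ ∑ p ∈ n.primeFactors \ Q, #{x ∈ Ico a (a + L) | d.Coprime x ∧ p ∣ x} :=
      (card_le_card cover).trans card_biUnion_le
    _ ≤ ∑ p ∈ n.primeFactors \ Q, L ⌈/⌉ (d * p) * φ d := sum_le_sum fun p hp => by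
      have hp0 := (prime_of_mem_primeFactors (mem_sdiff.1 hp).1).pos
      rw [← count_coprime_and_dvd hp0 (hcop p hp)]
      exact card_filter_Ico_le_ceilDiv_mul_count (periodic_coprime_and_dvd d p)
        (mul_pos hd hp0) a L
    _ = φ d * ∑ p ∈ n.primeFactors \ Q, L ⌈/⌉ (d * p) := by rw [mul_sum]; simp only [mul_comm]
  exact le_of_mul_le_mul_left key (totient_pos.2 hd)

theorem sum_range_ceilDiv_nth_lt_div {c k : ℕ}
    (hck : c = 3 ∧ k ∈ Icc 2 4 ∨ c = 5 ∧ k ∈ Icc 5 12) {Q : Finset ℕ} (hQ : Q ⊆ c.primesBelow) :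
    ∑ i ∈ range (k - #Q), k ^ 2 ⌈/⌉ ((∏ q ∈ Q, q) * nth (fun p => p.Prime ∧ c ≤ p) i) <
      k ^ 2 / ∏ q ∈ Q, q := by
  rw [← mem_powerset] at hQ
  rcases hck with ⟨rfl, hk⟩ | ⟨rfl, hk⟩
  · have hnth : ∀ i < 4, nth (fun p => p.Prime ∧ 3 ≤ p) i = [3, 5, 7, 11].getD i 0 := by
      intro i hi
      interval_cases i <;> exact nth_eq_of_count_eq (by decide) (by decide)
    rw [sum_congr rfl fun i hi => by rw [hnth i (by simp only [mem_range, mem_Icc] at hi hk; omega)]]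
    revert Q
    revert k
    decide
  · have hnth : ∀ i < 12, nth (fun p => p.Prime ∧ 5 ≤ p) i =
        [5, 7, 11, 13, 17, 19, 23, 29, 31, 37, 41, 43].getD i 0 := by
      intro i hi
      interval_cases i <;> exact nth_eq_of_count_eq (by decide) (by decide)
    rw [sum_congr rfl fun i hi => by rw [hnth i (by simp only [mem_range, mem_Icc] at hi hk; omega)]]
    revert Q
    revert k
    decide

theorem exists_coprime_mem_Ico_sq_card_primeFactors {n : ℕ} (hn : n ≠ 0)
    (h2 : 2 ≤ #n.primeFactors) (h12 : #n.primeFactors ≤ 12) (a : ℕ) :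
    ∃ x ∈ Ico a (a + #n.primeFactors ^ 2), n.Coprime x := by
  by_contra! h
  set k := #n.primeFactors
  -- Sieving exactly by 3 as well only pays off once the window is long enough.
  obtain ⟨c, hck⟩ : ∃ c, c = 3 ∧ k ∈ Icc 2 4 ∨ c = 5 ∧ k ∈ Icc 5 12 := by
    by_cases hk : k ≤ 4
    · exact ⟨3, .inl ⟨rfl, mem_Icc.2 ⟨h2, hk⟩⟩⟩
    · exact ⟨5, .inr ⟨rfl, mem_Icc.2 ⟨by omega, h12⟩⟩⟩
  set Q := {p ∈ n.primeFactors | p < c}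
  have hQ : Q ⊆ n.primeFactors := filter_subset _ _
  have hlarge : ∀ p ∈ n.primeFactors \ Q, p.Prime ∧ c ≤ p := fun p hp => by
    obtain ⟨hpn, hpQ⟩ := mem_sdiff.1 hp
    exact ⟨prime_of_mem_primeFactors hpn, not_lt.1 fun hpc => hpQ (mem_filter.2 ⟨hpn, hpc⟩)⟩
  have hinf : {p | p.Prime ∧ c ≤ p}.Infinite :=
    (infinite_setOfPred_prime.sdiff (Set.finite_Iio c)).mono fun p hp => ⟨hp.1, not_lt.1 hp.2⟩
  have hanti : AntitoneOn (fun p => k ^ 2 ⌈/⌉ ((∏ q ∈ Q, q) * p)) {p | p.Prime ∧ c ≤ p} :=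
    (antitoneOn_ceilDiv_mul _ (prod_pos fun q hq => (prime_of_mem_primeFactors (hQ hq)).pos)).mono
      fun p hp => hp.1.pos
  have hsieve := div_le_sum_ceilDiv_of_forall_not_coprime hn hQ h
  have hdom := sum_le_sum_range_nth hinf hanti hlarge
  rw [card_sdiff_of_subset hQ] at hdom
  refine (sum_range_ceilDiv_nth_lt_div hck fun q hq => ?_).not_ge (hsieve.trans hdom)
  obtain ⟨hqn, hqc⟩ := mem_filter.1 hq
  exact mem_primesBelow.2 ⟨hqc, prime_of_mem_primeFactors hqn⟩

end Nat

theorem Int.exists_gcd_eq_one_of_forall_exists_coprime_mem_Ico {n L : ℕ} (hn : 0 < n)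
    (h : ∀ a, ∃ x ∈ Ico a (a + L), n.Coprime x) (x : ℤ) :
    ∃ ν : ℤ, x + 1 ≤ ν ∧ ν ≤ x + L ∧ Int.gcd ν n = 1 := by
  have hrem : 0 ≤ (x + 1) % n := Int.emod_nonneg _ (by exact_mod_cast hn.ne')
  obtain ⟨m, hm, hcop⟩ := h ((x + 1) % n).toNat
  obtain ⟨j, rfl⟩ := Nat.exists_eq_add_of_le (mem_Ico.1 hm).1
  have hj : j < L := by have := (mem_Ico.1 hm).2; omega
  refine ⟨x + 1 + j, by omega, by omega, ?_⟩
  have hmod : (x + 1 + j) % n = ((((x + 1) % n).toNat + j : ℕ) : ℤ) % n := by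
    rw [Nat.cast_add, Int.toNat_of_nonneg hrem, Int.emod_add_emod]
  rw [← Int.gcd_emod, hmod, Int.gcd_emod, Int.gcd_natCast_natCast, Nat.gcd_comm]
  exact hcop

/-- If `2 ≤ ω(n) ≤ 12`, then for every integer `x`, among
`x + 1, …, x + ω(n)²` there is an integer coprime to `n`,
i.e. `g(n) ≤ ω(n)²` whenever `2 ≤ ω(n) ≤ 12`. -/
theorem jacobsthal_le_omega_sq (n : ℕ) (hn : 0 < n)
    (h2 : 2 ≤ n.primeFactors.card) (h12 : n.primeFactors.card ≤ 12) (x : ℤ) :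
    ∃ ν : ℤ, x + 1 ≤ ν ∧ ν ≤ x + n.primeFactors.card ^ 2 ∧
      Int.gcd ν (n : ℤ) = 1 := by
  exact_mod_cast Int.exists_gcd_eq_one_of_forall_exists_coprime_mem_Ico hn
    (Nat.exists_coprime_mem_Ico_sq_card_primeFactors hn.ne' h2 h12) x
end

section
/- Let n be a positive integer, let a and d be integers with gcd(gcd(a, d), n) = 1, and let G be a positive integer such that among any G consecutive integers there is at least one integer coprime to n. Then for every integer x there exists an integer ν with x + 1 ≤ ν ≤ x + G such that gcd(d·ν + a, n) = 1. -/
/-- If `gcd(a, d, n) = 1` and any `G` consecutive integers contain an integer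
coprime to `n`, then every interval `[x+1, x+G]` contains some `ν` with
`gcd(d·ν + a, n) = 1`. -/
theorem exists_coprime_in_arith_progression (n : ℕ) (hn : 0 < n) (a d : ℤ)
    (hgcd : Nat.gcd (Int.gcd a d) n = 1) (G : ℕ) (hG : 0 < G)
    (h : ∀ y : ℤ, ∃ ν : ℤ, y + 1 ≤ ν ∧ ν ≤ y + G ∧ Int.gcd ν (n : ℤ) = 1) :
    ∀ x : ℤ, ∃ ν : ℤ, x + 1 ≤ ν ∧ ν ≤ x + G ∧ Int.gcd (d * ν + a) (n : ℤ) = 1 := by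
  intro x
  set g : ℕ := Nat.gcd n (d.natAbs ^ n) with hg
  set m : ℕ := n / g with hmdef
  have hgdvd : g ∣ n := Nat.gcd_dvd_left _ _
  have hnm : n = m * g := (Nat.div_mul_cancel hgdvd).symm
  have hn0 : n ≠ 0 := hn.ne'
  -- d is coprime to m
  have hdm : Nat.Coprime d.natAbs m := by
    by_contra hne
    obtain ⟨p, hp, hpd⟩ := Nat.exists_prime_and_dvd hne
    have hpd' : p ∣ d.natAbs := hpd.trans (Nat.gcd_dvd_left _ _)
    have hpm : p ∣ m := hpd.trans (Nat.gcd_dvd_right _ _)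
    have hm0 : m ≠ 0 := by
      rintro h0
      rw [h0, zero_mul] at hnm
      exact hn0 hnm
    have hd0 : d.natAbs ≠ 0 := by
      rintro h0
      rw [h0] at hpd'
      have hgn : g = n := by rw [hg, h0, zero_pow hn0, Nat.gcd_zero_right]
      have hm1 : m = 1 := by rw [hmdef, hgn, Nat.div_self hn]
      exact hp.not_dvd_one (hm1 ▸ hpm)
    -- factorization argument: v_p(g) = v_p(n), so p ∤ m
    have hvd : 1 ≤ d.natAbs.factorization p := hp.factorization_pos_of_dvd hd0 hpd'
    have hvn : n.factorization p ≤ n := (Nat.factorization_lt p hn0).le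
    have hvg : g.factorization p = n.factorization p := by
      rw [hg, Nat.factorization_gcd hn0 (pow_ne_zero _ hd0)]
      simp only [Finsupp.inf_apply, Nat.factorization_pow, Finsupp.smul_apply, smul_eq_mul]
      exact min_eq_left (hvn.trans (le_mul_of_one_le_right (Nat.zero_le _) hvd))
    have hvm : m.factorization p = 0 := by
      have := Nat.factorization_div hgdvd
      rw [← hmdef] at this
      rw [this]
      simp [hvg]
    exact (Nat.Prime.factorization_pos_of_dvd hp hm0 hpm).ne' hvm
  -- get Bezout: u*d + v*m = 1
  have hdm' : IsCoprime d (m : ℤ) := by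
    rw [Int.isCoprime_iff_gcd_eq_one]
    exact hdm
  obtain ⟨u, v, huv⟩ := hdm'
  -- apply h at shifted point
  obtain ⟨ν', h1, h2, h3⟩ := h (x + u * a)
  refine ⟨ν' - u * a, by linarith, by linarith, ?_⟩
  by_contra hne
  obtain ⟨p, hp, hpd⟩ := Nat.exists_prime_and_dvd hne
  have hpn : p ∣ n := hpd.trans (Nat.gcd_dvd_right _ _)
  have hpval : (p : ℤ) ∣ d * (ν' - u * a) + a := by
    have := hpd.trans (Nat.gcd_dvd_left _ _)
    exact Int.dvd_natAbs.mp (Int.natCast_dvd_natCast.mpr this)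
  by_cases hcase : p ∣ d.natAbs
  · -- p ∣ d, so p ∣ a, contradicting gcd(a,d,n)=1
    have hpdZ : (p : ℤ) ∣ d := Int.dvd_natAbs.mp (Int.natCast_dvd_natCast.mpr hcase)
    have hpa : (p : ℤ) ∣ a := by
      have : a = (d * (ν' - u * a) + a) - d * (ν' - u * a) := by ring
      rw [this]
      exact dvd_sub hpval (hpdZ.mul_right _)
    have hpg : p ∣ Int.gcd a d :=
      Nat.dvd_gcd (Int.natCast_dvd_natCast.mp (Int.dvd_natAbs.mpr hpa)) hcase
    have : p ∣ 1 := hgcd ▸ Nat.dvd_gcd hpg hpn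
    exact hp.one_lt.ne' (Nat.dvd_one.mp this)
  · -- p ∤ d, so p ∣ m, and p ∣ d*ν', so p ∣ ν', contradicting gcd(ν',n)=1
    have hpm : p ∣ m := by
      rcases (hp.dvd_mul.mp (hnm ▸ hpn)) with h' | h'
      · exact h'
      · exact absurd (hp.dvd_of_dvd_pow (h'.trans (Nat.gcd_dvd_right _ _))) hcase
    have hpmZ : (p : ℤ) ∣ (m : ℤ) := Int.natCast_dvd_natCast.mpr hpm
    have key : (p : ℤ) ∣ d * ν' := by
      have h4 : (p:ℤ) ∣ a * (v * (m:ℤ)) := (hpmZ.mul_left v).mul_left a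
      have h5 : (p:ℤ) ∣ (d * (ν' - u * a) + a) - a * (v * (m:ℤ)) := dvd_sub hpval h4
      have heq : d * ν' = ((d * (ν' - u * a) + a) - a * (v * (m:ℤ)))
          + a * ((u * d + v * (m:ℤ)) - 1) := by ring
      rw [heq, huv]
      simpa using h5
    have hpnu : p ∣ (d * ν').natAbs := Int.natCast_dvd_natCast.mp (Int.dvd_natAbs.mpr key)
    have : p ∣ d.natAbs * ν'.natAbs := by rwa [Int.natAbs_mul] at hpnu
    rcases hp.dvd_mul.mp this with h' | h'
    · exact hcase h'
    · have : p ∣ Int.gcd ν' (n : ℤ) := Nat.dvd_gcd h' (by simpa using hpn)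
      rw [h3] at this
      exact hp.one_lt.ne' (Nat.dvd_one.mp this)
end

section
/- For every integer d > 2 there exists an integer a with gcd(d, a) = 1 and d/12 < a ≤ 5d/12. -/
private lemma coprime_interval_helper (d a u v : ℤ) (hb : u * d + v * a = 1)
    (h1 : d < 12 * a) (h2 : 12 * a ≤ 5 * d) :
    Int.gcd d a = 1 ∧ (d : ℚ) / 12 < (a : ℚ) ∧ (a : ℚ) ≤ 5 * d / 12 := by
  refine ⟨Int.isCoprime_iff_gcd_eq_one.mp ⟨u, v, hb⟩, ?_, ?_⟩
  · rw [div_lt_iff₀ (by norm_num : (0:ℚ) < 12)]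
    exact_mod_cast (by linarith : d < a * 12)
  · rw [le_div_iff₀ (by norm_num : (0:ℚ) < 12)]
    exact_mod_cast (by linarith : a * 12 ≤ 5 * d)

/-- For every integer `d > 2` there exists an integer `a` with `gcd(d, a) = 1`
and `d/12 < a ≤ 5d/12`. -/
theorem exists_coprime_in_middle_interval (d : ℤ) (hd : 2 < d) :
    ∃ a : ℤ, Int.gcd d a = 1 ∧ (d : ℚ) / 12 < (a : ℚ) ∧ (a : ℚ) ≤ 5 * d / 12 := by
  rcases (by omega : d % 12 = 0 ∨ d % 12 = 1 ∨ d % 12 = 2 ∨ d % 12 = 3 ∨ d % 12 = 4 ∨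
      d % 12 = 5 ∨ d % 12 = 6 ∨ d % 12 = 7 ∨ d % 12 = 8 ∨ d % 12 = 9 ∨ d % 12 = 10 ∨
      d % 12 = 11) with h|h|h|h|h|h|h|h|h|h|h|h
  · -- d ≡ 0 mod 12 : split mod 36
    rcases (by omega : d % 36 = 0 ∨ d % 36 = 12 ∨ d % 36 = 24) with h'|h'|h'
    · obtain ⟨q, rfl⟩ : ∃ q, d = 36 * q := ⟨d / 36, by omega⟩
      exact ⟨12 * q + 1, coprime_interval_helper _ _ (4 * q) (1 - 12 * q)
        (by ring) (by omega) (by omega)⟩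
    · obtain ⟨q, rfl⟩ : ∃ q, d = 36 * q + 12 := ⟨d / 36, by omega⟩
      exact ⟨12 * q + 5, coprime_interval_helper _ _ (8 * q + 3) (-(24 * q + 7))
        (by ring) (by omega) (by omega)⟩
    · obtain ⟨q, rfl⟩ : ∃ q, d = 36 * q + 24 := ⟨d / 36, by omega⟩
      exact ⟨12 * q + 7, coprime_interval_helper _ _ (-(4 * q + 2)) (12 * q + 7)
        (by ring) (by omega) (by omega)⟩
  · obtain ⟨q, rfl⟩ : ∃ q, d = 12 * q + 1 := ⟨d / 12, by omega⟩
    exact ⟨3 * q, coprime_interval_helper _ _ 1 (-4) (by ring) (by omega) (by omega)⟩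
  · obtain ⟨q, rfl⟩ : ∃ q, d = 12 * q + 2 := ⟨d / 12, by omega⟩
    exact ⟨4 * q + 1, coprime_interval_helper _ _ (-1) 3 (by ring) (by omega) (by omega)⟩
  · obtain ⟨q, rfl⟩ : ∃ q, d = 12 * q + 3 := ⟨d / 12, by omega⟩
    exact ⟨3 * q + 1, coprime_interval_helper _ _ (-1) 4 (by ring) (by omega) (by omega)⟩
  · obtain ⟨q, rfl⟩ : ∃ q, d = 12 * q + 4 := ⟨d / 12, by omega⟩
    exact ⟨4 * q + 1, coprime_interval_helper _ _ 1 (-3) (by ring) (by omega) (by omega)⟩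
  · obtain ⟨q, rfl⟩ : ∃ q, d = 12 * q + 5 := ⟨d / 12, by omega⟩
    exact ⟨3 * q + 1, coprime_interval_helper _ _ 1 (-4) (by ring) (by omega) (by omega)⟩
  · -- d ≡ 6 mod 12 : split mod 24
    rcases (by omega : d % 24 = 6 ∨ d % 24 = 18) with h'|h'
    · obtain ⟨q, rfl⟩ : ∃ q, d = 24 * q + 6 := ⟨d / 24, by omega⟩
      exact ⟨6 * q + 1, coprime_interval_helper _ _ (-(3 * q)) (12 * q + 1)
        (by ring) (by omega) (by omega)⟩
    · obtain ⟨q, rfl⟩ : ∃ q, d = 24 * q + 18 := ⟨d / 24, by omega⟩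
      exact ⟨6 * q + 5, coprime_interval_helper _ _ (3 * q + 2) (-(12 * q + 7))
        (by ring) (by omega) (by omega)⟩
  · obtain ⟨q, rfl⟩ : ∃ q, d = 12 * q + 7 := ⟨d / 12, by omega⟩
    exact ⟨3 * q + 2, coprime_interval_helper _ _ (-1) 4 (by ring) (by omega) (by omega)⟩
  · obtain ⟨q, rfl⟩ : ∃ q, d = 12 * q + 8 := ⟨d / 12, by omega⟩
    exact ⟨4 * q + 3, coprime_interval_helper _ _ (-1) 3 (by ring) (by omega) (by omega)⟩
  · obtain ⟨q, rfl⟩ : ∃ q, d = 12 * q + 9 := ⟨d / 12, by omega⟩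
    exact ⟨3 * q + 2, coprime_interval_helper _ _ 1 (-4) (by ring) (by omega) (by omega)⟩
  · obtain ⟨q, rfl⟩ : ∃ q, d = 12 * q + 10 := ⟨d / 12, by omega⟩
    exact ⟨4 * q + 3, coprime_interval_helper _ _ 1 (-3) (by ring) (by omega) (by omega)⟩
  · obtain ⟨q, rfl⟩ : ∃ q, d = 12 * q + 11 := ⟨d / 12, by omega⟩
    exact ⟨3 * q + 3, coprime_interval_helper _ _ (-1) 4 (by ring) (by omega) (by omega)⟩
end

section
/- Let n ≥ 3 be an odd integer, let t be an integer, and let k ≥ 1 be an integer such that n·(1 − 1/2^k) < t < n·(1 − 1/2^{k+1}). If 2^k + (2^k·t mod n) > n/2, then t = ⌊n·(1 − 1/2^{k+1})⌋. -/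
/-- Let `n ≥ 3` be odd, and `k ≥ 1` with
`n(1 − 1/2^k) < t < n(1 − 1/2^{k+1})`. If `2^k + (2^k·t mod n) > n/2`, then
`t = ⌊n(1 − 1/2^{k+1})⌋`. -/
theorem t_eq_floor_of_mod_large (n t : ℤ) (k : ℕ)
    (hn : 3 ≤ n) (hodd : Odd n) (hk : 1 ≤ k)
    (hlo : (n : ℚ) * (1 - 1 / 2 ^ k) < (t : ℚ))
    (hhi : (t : ℚ) < (n : ℚ) * (1 - 1 / 2 ^ (k + 1)))
    (hmod : (2 ^ k : ℚ) + (((2 ^ k * t) % n : ℤ) : ℚ) > (n : ℚ) / 2) :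
    t = ⌊(n : ℚ) * (1 - 1 / 2 ^ (k + 1))⌋ := by
  set u : ℤ := n * 2 ^ k - 2 ^ k * t with hu
  have h2k : (0:ℚ) < 2 ^ k := by positivity
  have e : (u:ℚ) = n * 2 ^ k - 2 ^ k * t := by rw [hu]; push_cast; ring
  -- u < n
  have h1 : (u:ℚ) < n := by
    have h := mul_lt_mul_of_pos_right hlo h2k
    have h2 : (n:ℚ) * (1 - 1/2^k) * 2^k = n * 2^k - n := by field_simp
    rw [h2] at h
    linarith [e]
  -- n < 2u
  have h2 : (n:ℚ) < 2 * u := by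
    have hp : (0:ℚ) < 2 ^ (k+1) := by positivity
    have h := mul_lt_mul_of_pos_right hhi hp
    have h3 : (n:ℚ) * (1 - 1/2^(k+1)) * 2^(k+1) = n * 2^(k+1) - n := by field_simp
    rw [h3] at h
    have : (2:ℚ)^(k+1) = 2 * 2^k := by ring
    nlinarith [e]
  have hnq : (0:ℚ) < n := by exact_mod_cast lt_of_lt_of_le (by norm_num) hn
  have hu0 : 0 < u := by
    have : (0:ℚ) < u := by linarith
    exact_mod_cast this
  have hun : u < n := by exact_mod_cast h1
  -- the mod computation
  have hm : (2 ^ k * t) % n = n - u := by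
    have hrw : 2 ^ k * t = (n - u) + n * (2 ^ k - 1) := by rw [hu]; ring
    rw [hrw, Int.add_mul_emod_self_left, Int.emod_eq_of_lt (by omega) (by omega)]
  rw [hm] at hmod
  have h3 : 2 * (u:ℚ) < n + 2 ^ (k+1) := by
    push_cast at hmod
    have : (2:ℚ)^(k+1) = 2 * 2^k := by ring
    linarith
  symm
  rw [Int.floor_eq_iff]
  constructor
  · exact le_of_lt hhi
  · have hp : (0:ℚ) < 2 ^ (k+1) := by positivity
    rw [show (n:ℚ) * (1 - 1/2^(k+1)) = (n * 2^(k+1) - n) / 2^(k+1) by field_simp]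
    rw [div_lt_iff₀ hp]
    have h6 : (2:ℚ)^(k+1) = 2 * 2^k := by ring
    nlinarith [e]
end

section
/- Let n be a positive integer, let b be an integer with 3 ≤ b ≤ n/2, and set t = n − b. Assume that for every integer p with 1 ≤ p < n and gcd(p, n) = 1 we have n/2 < p + (p·t mod n) < 3n/2. Then no integer p with n/(2(b−1)) < p ≤ n/b is coprime to n. (In particular, the interval (n/(2(b−1)), n/b] contains no integer relatively prime to n.) -/
/-!
For `p` in the interval we have `0 < p * b ≤ n`, so `p * (n - b) ≡ n - p * b` is already reduced
modulo `n`. The lower Kenyon–Smillie bound for a coprime `p` then reads `p * (b - 1) < n / 2`,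
which is exactly the negation of `n / (2 * (b - 1)) < p`.
-/

theorem Int.mul_sub_emod_self_of_mul_le {n b p : ℤ} (hpos : 0 < p * b) (hle : p * b ≤ n) :
    (p * (n - b)) % n = n - p * b := by
  have hrepr : p * (n - b) = (n - p * b) + (p - 1) * n := by ring
  rw [hrepr, Int.add_mul_emod_self_right, Int.emod_eq_of_lt (by omega) (by omega)]

theorem add_sub_mul_le_half_of_div_lt {K : Type*} [Field K] [LinearOrder K] [IsStrictOrderedRing K]
    {n b p : K} (hb : 1 < b) (hp : n / (2 * (b - 1)) < p) : p + (n - p * b) ≤ n / 2 := by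
  rw [div_lt_iff₀ (by linarith)] at hp
  linarith

theorem no_coprime_in_interval_general (n b t : ℤ) (hn : 0 < n) (hb : 3 ≤ b)
    (ht : t = n - b)
    (h : ∀ p : ℤ, 1 ≤ p → p < n → Int.gcd p n = 1 →
      (n : ℚ) / 2 < (p : ℚ) + (((p * t) % n : ℤ) : ℚ) ∧
      (p : ℚ) + (((p * t) % n : ℤ) : ℚ) < 3 * n / 2) :
    ∀ p : ℤ, (n : ℚ) / (2 * (b - 1)) < (p : ℚ) → (p : ℚ) ≤ (n : ℚ) / b →
      Int.gcd p n ≠ 1 := by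
  intro p hlo hhi hcop
  have hbQ : (1 : ℚ) < b := by exact_mod_cast (by omega : 1 < b)
  have hp : 1 ≤ p := by
    have : (0 : ℚ) < p := lt_trans (div_pos (by exact_mod_cast hn) (by linarith)) hlo
    exact_mod_cast this
  have hpb : p * b ≤ n := by
    rw [le_div_iff₀ (by linarith)] at hhi
    exact_mod_cast hhi
  have hpn : p < n := by nlinarith
  have hlower := (h p hp hpn hcop).1
  rw [ht, Int.mul_sub_emod_self_of_mul_le (by positivity) hpb] at hlower
  push_cast at hlower
  exact (add_sub_mul_le_half_of_div_lt hbQ hlo).not_gt hlower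

/-- If `t = n − b` with `3 ≤ b ≤ n/2` and the Kenyon–Smillie condition holds
(with `s = 1`), then the interval `(n/(2(b−1)), n/b]` contains no integer
coprime to `n`. -/
theorem no_coprime_in_interval (n b t : ℤ) (hn : 0 < n) (hb : 3 ≤ b)
    (hbn : (b : ℚ) ≤ (n : ℚ) / 2) (ht : t = n - b)
    (h : ∀ p : ℤ, 1 ≤ p → p < n → Int.gcd p n = 1 →
      (n : ℚ) / 2 < (p : ℚ) + (((p * t) % n : ℤ) : ℚ) ∧
      (p : ℚ) + (((p * t) % n : ℤ) : ℚ) < 3 * n / 2) :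
    ∀ p : ℤ, (n : ℚ) / (2 * (b - 1)) < (p : ℚ) → (p : ℚ) ≤ (n : ℚ) / b →
      Int.gcd p n ≠ 1 :=
  no_coprime_in_interval_general n b t hn hb ht h
end

section
/- Let n be an even positive integer, let b be an integer with 2 ≤ b < n/2, and set t = n/2 + b. Assume that for every integer p with 1 ≤ p < n and gcd(p, n) = 1 we have n/2 < p + (p·t mod n) < 3n/2. Then every integer p with 1 ≤ p < n and gcd(p, n) = 1 satisfies b·p < n/2 or b·p > n − p. -/
/-!
Write `n = 2m`. A `p` coprime to `n` is odd, so `p m ≡ m (mod n)` and `p t ≡ b p + m (mod n)`.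
If `m ≤ b p ≤ n - p`, this residue is `b p - m`, and the hypothesis `m < p + (p t mod n)` becomes
`n - p < b p`, a contradiction.
-/

theorem Int.odd_of_gcd_eq_one_of_even {p n : ℤ} (hn : Even n) (hpn : Int.gcd p n = 1) : Odd p := by
  rw [← Int.not_even_iff_odd]
  intro hp
  have h2 : (2 : ℤ) ∣ (Int.gcd p n : ℤ) := Int.dvd_coe_gcd hp.two_dvd hn.two_dvd
  rw [hpn] at h2
  norm_num at h2

theorem Int.odd_mul_modEq_two_mul_self {p : ℤ} (hp : Odd p) (m : ℤ) : p * m ≡ m [ZMOD 2 * m] := by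
  obtain ⟨k, rfl⟩ := hp
  exact Int.modEq_iff_dvd.mpr ⟨-k, by ring⟩

theorem Int.add_emod_two_mul_of_le_of_lt {m x : ℤ} (h₁ : m ≤ x) (h₂ : x < 3 * m) :
    (x + m) % (2 * m) = x - m := by
  rw [show x + m = x - m + 2 * m by ring, Int.add_emod_right]
  exact Int.emod_eq_of_lt (by omega) (by omega)

theorem bp_lt_or_gt_general (n b t : ℤ) (heven : Even n)
    (ht : t = n / 2 + b)
    (h : ∀ p : ℤ, 1 ≤ p → p < n → Int.gcd p n = 1 →
      (n : ℚ) / 2 < (p : ℚ) + (((p * t) % n : ℤ) : ℚ) ∧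
      (p : ℚ) + (((p * t) % n : ℤ) : ℚ) < 3 * n / 2) :
    ∀ p : ℤ, 1 ≤ p → p < n → Int.gcd p n = 1 →
      ((b * p : ℤ) : ℚ) < (n : ℚ) / 2 ∨ ((b * p : ℤ) : ℚ) > (n : ℚ) - (p : ℚ) := by
  intro p hp1 hpn hgcd
  have hodd := Int.odd_of_gcd_eq_one_of_even heven hgcd
  obtain ⟨m, hm⟩ := heven
  obtain rfl : n = 2 * m := by omega
  obtain rfl : t = m + b := by omega
  have hhalf : ((2 * m : ℤ) : ℚ) / 2 = m := by push_cast; ring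
  by_contra! hcon
  rw [hhalf] at hcon
  have hlow : m ≤ b * p := by exact_mod_cast hcon.1
  have hhigh : b * p ≤ 2 * m - p := by exact_mod_cast hcon.2
  have hres : p * (m + b) % (2 * m) = b * p - m := by
    have hmod : p * (m + b) ≡ b * p + m [ZMOD 2 * m] := by
      rw [mul_add, add_comm, mul_comm p b]
      exact (Int.odd_mul_modEq_two_mul_self hodd m).add_left (b * p)
    rw [hmod, Int.add_emod_two_mul_of_le_of_lt hlow (by omega)]
  have hlower := (h p hp1 hpn hgcd).1
  rw [hres, hhalf] at hlower
  have : m < p + (b * p - m) := by exact_mod_cast hlower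
  omega

/-- If `n` is even, `t = n/2 + b` with `2 ≤ b < n/2`, and the Kenyon–Smillie
condition holds (with `s = 1`), then every `p` coprime to `n` with `1 ≤ p < n`
satisfies `bp < n/2` or `bp > n − p`. -/
theorem bp_lt_or_gt (n b t : ℤ) (hn : 0 < n) (heven : Even n)
    (hb : 2 ≤ b) (hbn : (b : ℚ) < (n : ℚ) / 2) (ht : t = n / 2 + b)
    (h : ∀ p : ℤ, 1 ≤ p → p < n → Int.gcd p n = 1 →
      (n : ℚ) / 2 < (p : ℚ) + (((p * t) % n : ℤ) : ℚ) ∧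
      (p : ℚ) + (((p * t) % n : ℤ) : ℚ) < 3 * n / 2) :
    ∀ p : ℤ, 1 ≤ p → p < n → Int.gcd p n = 1 →
      ((b * p : ℤ) : ℚ) < (n : ℚ) / 2 ∨ ((b * p : ℤ) : ℚ) > (n : ℚ) - (p : ℚ) :=
  bp_lt_or_gt_general n b t heven ht h
end

section
/- Let n be a positive integer such that every odd prime p with p² ≤ n divides n. Then n < 121. -/
open Finset

/-- The set of odd primes up to `k`. -/
def oddPrimesUpTo (k : ℕ) : Finset ℕ :=
  (Finset.range (k + 1)).filter (fun q => Nat.Prime q ∧ q ≠ 2)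

lemma mem_oddPrimesUpTo {k q : ℕ} :
    q ∈ oddPrimesUpTo k ↔ q ≤ k ∧ Nat.Prime q ∧ q ≠ 2 := by
  simp [oddPrimesUpTo, Nat.lt_succ_iff, and_comm]

lemma oddPrimesUpTo_11 : oddPrimesUpTo 11 = {3, 5, 7, 11} := by decide

lemma key (p : ℕ) (hp : p.Prime) (hp11 : 11 ≤ p) :
    4 * p ^ 2 < ∏ q ∈ oddPrimesUpTo p, q := by
  induction p using Nat.strong_induction_on with
  | _ p IH =>
    rcases eq_or_lt_of_le hp11 with h11 | h11
    · subst_vars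
      rw [oddPrimesUpTo_11]
      decide
    · -- p > 11. Take the largest prime p' < p.
      set F := (Finset.range p).filter Nat.Prime with hF
      have hne : F.Nonempty := ⟨11, by simp only [hF, mem_filter, mem_range]; exact ⟨by omega, by norm_num⟩⟩
      set p' := F.max' hne with hp'
      have hp'mem : p' ∈ F := F.max'_mem hne
      have hp'prime : p'.Prime := (mem_filter.1 hp'mem).2
      have hp'lt : p' < p := by
        have := (mem_filter.1 hp'mem).1; simpa using this
      have hp'11 : 11 ≤ p' := F.le_max' 11 (by simp only [hF, mem_filter, mem_range]; exact ⟨by omega, by norm_num⟩)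
      have hmax : ∀ q ∈ F, q ≤ p' := fun q hq => F.le_max' q hq
      -- Bertrand: prime r with p' < r ≤ 2p'; r ≥ p by maximality
      obtain ⟨r, hr, hrl, hru⟩ := Nat.exists_prime_lt_and_le_two_mul p' (by omega)
      have hpr : p ≤ r := by
        by_contra hc
        exact absurd (hmax r (mem_filter.2 ⟨mem_range.2 (by omega), hr⟩)) (by omega)
      have hp2p' : p ≤ 2 * p' := le_trans hpr hru
      -- oddPrimesUpTo p = insert p (oddPrimesUpTo p')
      have hset : oddPrimesUpTo p = insert p (oddPrimesUpTo p') := by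
        ext q
        simp only [mem_oddPrimesUpTo, mem_insert]
        constructor
        · rintro ⟨hq, hqp, hq2⟩
          rcases eq_or_lt_of_le hq with h | h
          · exact Or.inl h
          · refine Or.inr ⟨?_, hqp, hq2⟩
            exact hmax q (mem_filter.2 ⟨mem_range.2 h, hqp⟩)
        · rintro (rfl | ⟨hq, hqp, hq2⟩)
          · exact ⟨le_rfl, hp, by omega⟩
          · exact ⟨by omega, hqp, hq2⟩
      have hnotmem : p ∉ oddPrimesUpTo p' := by
        rw [mem_oddPrimesUpTo]; omega
      rw [hset, Finset.prod_insert hnotmem]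
      have hIH := IH p' hp'lt hp'prime hp'11
      calc 4 * p ^ 2 ≤ p * (4 * (2 * p')) := by nlinarith
        _ < p * (4 * p' ^ 2) := by
            have h1 : 4 * (2 * p') < 4 * p' ^ 2 := by nlinarith
            exact (Nat.mul_lt_mul_left (by omega : 0 < p)).2 h1
        _ ≤ p * ∏ q ∈ oddPrimesUpTo p', q := Nat.mul_le_mul_left p hIH.le

/-- If every odd prime `p` with `p² ≤ n` divides `n`, then `n < 121`. -/
theorem lt_121_of_all_small_odd_primes_dvd (n : ℕ) (hn : 0 < n)
    (h : ∀ p : ℕ, p.Prime → p ≠ 2 → p ^ 2 ≤ n → p ∣ n) : n < 121 := by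
  by_contra hc
  push_neg at hc
  -- largest prime P with P² ≤ n
  set F := (Finset.range (n + 1)).filter (fun p => Nat.Prime p ∧ p ^ 2 ≤ n) with hF
  have h11 : (11 : ℕ) ∈ F := by
    simp only [hF, mem_filter, mem_range]
    refine ⟨by omega, by norm_num, by omega⟩
  have hne : F.Nonempty := ⟨11, h11⟩
  set P := F.max' hne with hP
  have hPmem : P ∈ F := F.max'_mem hne
  obtain ⟨hPprime, hPsq⟩ : Nat.Prime P ∧ P ^ 2 ≤ n := (mem_filter.1 hPmem).2
  have hP11 : 11 ≤ P := F.le_max' 11 h11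
  obtain ⟨r, hr, hrl, hru⟩ := Nat.exists_prime_lt_and_le_two_mul P (by omega)
  have hrsq : n < r ^ 2 := by
    by_contra hc2
    push_neg at hc2
    have : r ∈ F := by
      refine mem_filter.2 ⟨mem_range.2 ?_, hr, hc2⟩
      nlinarith [hr.two_le]
    exact absurd (F.le_max' r this) (by omega)
  have hn4 : n < 4 * P ^ 2 := by nlinarith
  have hdvd : (∏ q ∈ oddPrimesUpTo P, q) ∣ n := by
    refine Finset.prod_primes_dvd n ?_ ?_
    · intro q hq
      exact ((mem_oddPrimesUpTo.1 hq).2.1).prime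
    · intro q hq
      obtain ⟨hqP, hqp, hq2⟩ := mem_oddPrimesUpTo.1 hq
      exact h q hqp hq2 (le_trans (Nat.pow_le_pow_left hqP 2) hPsq)
  have hle : (∏ q ∈ oddPrimesUpTo P, q) ≤ n := Nat.le_of_dvd hn hdvd
  have := key P hPprime hP11
  omega
end
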